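/- Suppose Assumption (AQ) holds. Then for any m, m' ∈ P(E) and any η ∈ P*(R^d), ‖mM^η − m'M^η‖_TV ≤ (1 − ε_Q e^{−λ·osc(η)}) ‖m − m'‖_TV, where osc(η) = sup_{x,y∈R^d} |η(x) − η(y)| is the oscillation of the density of η. -/

import Mathlib

noncomputable section

open MeasureTheory ProbabilityTheory Filter Real
open scoped ENNReal NNReal

/-- Euclidean state space `ℝ^d`. -/
abbrev Rd (d : ℕ) : Type := EuclideanSpace ℝ (Fin d)

variable {d : ℕ}

/-- A probability density with respect to a reference measure `ℓ`. -/
def IsDensity (ℓ : Measure (Rd d)) (η : Rd d → ℝ) : Prop :=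
  Measurable η ∧ (∀ x, 0 ≤ η x) ∧ ∫ x, η x ∂ℓ = 1

/-- A transition-kernel density with respect to `ℓ`. -/
def IsKernelDensity (ℓ : Measure (Rd d)) (p : Rd d → Rd d → ℝ) : Prop :=
  Measurable (Function.uncurry p) ∧ (∀ x y, 0 ≤ p x y) ∧ ∀ x, ∫ y, p x y ∂ℓ = 1

/-- Measurable functions bounded by one. -/
def B1 (S : Type*) [MeasurableSpace S] : Set (S → ℝ) :=
  {f | Measurable f ∧ ∀ x, |f x| ≤ 1}

/-- Total-variation distance, as the supremum over `B1` test functions. -/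
def tvDist {S : Type*} [MeasurableSpace S] (μ ν : Measure S) : ℝ :=
  ⨆ f : B1 S, |∫ x, (f : S → ℝ) x ∂μ - ∫ x, (f : S → ℝ) x ∂ν|

/-- Total-variation distance between densities. -/
def tvDen (ℓ : Measure (Rd d)) (g h : Rd d → ℝ) : ℝ := ∫ x, |g x - h x| ∂ℓ

/-- Sup-norm distance between densities. -/
def supDist (g h : Rd d → ℝ) : ℝ := ⨆ x, |g x - h x|

/-- The transition kernel `M^Ψ` driven by the potential field `Ψ`. -/
def Mker {E : Set (Rd d)} (Q Q0 : Kernel E E) (lam : ℝ) (Ψ : Rd d → ℝ) (x : E) :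
    Measure E :=
  (Q x).withDensity (fun y => ENNReal.ofReal (Real.exp (-(lam * max (Ψ x.1 - Ψ y.1) 0))))
    + ENNReal.ofReal (1 - ∫ z, Real.exp (-(lam * max (Ψ x.1 - Ψ z.1) 0)) ∂(Q x)) • Q0 x

/-- `m ↦ m M^Ψ`. -/
def mStep {E : Set (Rd d)} (Q Q0 : Kernel E E) (lam : ℝ) (Ψ : Rd d → ℝ)
    (m : Measure E) : Measure E :=
  m.bind (Mker Q Q0 lam Ψ)

/-- The density of `η R_m`, where `R_m = (1-ε) P + ε m P'`. -/
def etaStep {E : Set (Rd d)} (ℓ : Measure (Rd d)) (p p' : Rd d → Rd d → ℝ) (ε : ℝ)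
    (m : Measure E) (η : Rd d → ℝ) : Rd d → ℝ :=
  fun y => (1 - ε) * ∫ x, η x * p x y ∂ℓ + ε * ∫ x, p' x.1 y ∂m

/-- One step `Φ(m, η) = (m M^η, η R_m)` of the nonlinear dynamics. -/
def Phi {E : Set (Rd d)} (Q Q0 : Kernel E E) (lam : ℝ) (ℓ : Measure (Rd d))
    (p p' : Rd d → Rd d → ℝ) (ε : ℝ) :
    Measure E × (Rd d → ℝ) → Measure E × (Rd d → ℝ) :=
  fun q => (mStep Q Q0 lam q.2 q.1, etaStep ℓ p p' ε q.1 q.2)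

/-- Empirical measure of `N` points. -/
def empMeas {E : Set (Rd d)} {N : ℕ} (x : Fin N → E) : Measure E :=
  (N : ℝ≥0∞)⁻¹ • ∑ j, Measure.dirac (x j)

/-- The potential field sequence `η_k^N` generated by the `N`-particle system. -/
def etaSeq {E : Set (Rd d)} (ℓ : Measure (Rd d)) (p p' : Rd d → Rd d → ℝ) (ε : ℝ)
    {Ω : Type*} {N : ℕ} (X : ℕ → Ω → (Fin N → E)) (η0 : Rd d → ℝ) :
    ℕ → Ω → Rd d → ℝ
  | 0 => fun _ => η0
  | k + 1 => fun ω => etaStep ℓ p p' ε (empMeas (X k ω)) (etaSeq ℓ p p' ε X η0 k ω)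

/-- History filtration of a process. -/
def histF {Ω α : Type*} [MeasurableSpace α] (X : ℕ → Ω → α) (k : ℕ) :
    MeasurableSpace Ω :=
  ⨆ i : Fin (k + 1), MeasurableSpace.comap (X i.1) inferInstance

/-- The `N`-interacting-particle system: conditionally on the past, the particles
move independently according to `M^{η_k^N}`. -/
structure IsParticleSystem {E : Set (Rd d)} (Q Q0 : Kernel E E) (lam : ℝ)
    (ℓ : Measure (Rd d)) (p p' : Rd d → Rd d → ℝ) (ε : ℝ) {N : ℕ}
    {Ω : Type*} [MeasurableSpace Ω] (Pr : Measure Ω)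
    (X : ℕ → Ω → (Fin N → E)) (η0 : Rd d → ℝ) : Prop where
  prob : IsProbabilityMeasure Pr
  meas_X : ∀ k, Measurable (X k)
  density_η0 : IsDensity ℓ η0
  condLaw : ∀ (k : ℕ) (A : Set (Fin N → E)), MeasurableSet A →
    ∀ B : Set Ω, MeasurableSet[histF X k] B →
      (Pr (B ∩ X (k + 1) ⁻¹' A)).toReal =
        ∫ ω in B, ((Measure.pi fun j =>
            Mker Q Q0 lam (etaSeq ℓ p p' ε X η0 k ω) (X k ω j)) A).toReal ∂Pr

/-- The potential field sequence `η̃_k^N` of the approximating particle scheme. -/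
def etaTildeSeq {E : Set (Rd d)} (ℓ : Measure (Rd d)) (p p' : Rd d → Rd d → ℝ) (ε : ℝ)
    {Ω : Type*} {N : ℕ} (X : ℕ → Ω → (Fin N → E)) (Y : ℕ → Ω → (Fin N → Rd d))
    (η0 : Rd d → ℝ) : ℕ → Ω → Rd d → ℝ
  | 0 => fun _ => η0
  | k + 1 => fun ω y =>
      (1 - ε) * ((N : ℝ)⁻¹ * ∑ i, p (Y (k + 1) ω i) y)
        + ε * ((N : ℝ)⁻¹ * ∑ j, p' (X k ω j).1 y)

/-- The approximating particle scheme: `X̃` are the particles, `Y` the auxiliary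
samples used to approximate the potential field. -/
structure IsSchemeSystem {E : Set (Rd d)} (Q Q0 : Kernel E E) (lam : ℝ)
    (ℓ : Measure (Rd d)) (p p' : Rd d → Rd d → ℝ) (ε : ℝ)
    (m0 : Measure E) (η0 : Rd d → ℝ) {N : ℕ}
    {Ω : Type*} [MeasurableSpace Ω] (Pr : Measure Ω)
    (X : ℕ → Ω → (Fin N → E)) (Y : ℕ → Ω → (Fin N → Rd d)) : Prop where
  prob : IsProbabilityMeasure Pr
  meas_X : ∀ k, Measurable (X k)
  meas_Y : ∀ k, Measurable (Y k)
  init_indep : iIndepFun (fun i ω => X 0 ω i) Pr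
  init_law : ∀ i, Pr.map (fun ω => X 0 ω i) = m0
  condLaw : ∀ (k : ℕ) (A : Set ((Fin N → E) × (Fin N → Rd d))), MeasurableSet A →
    ∀ B : Set Ω, MeasurableSet[histF X k ⊔ histF Y k] B →
      (Pr (B ∩ (fun ω => (X (k + 1) ω, Y (k + 1) ω)) ⁻¹' A)).toReal =
        ∫ ω in B,
          (((Measure.pi fun j =>
              Mker Q Q0 lam (etaTildeSeq ℓ p p' ε X Y η0 k ω) (X k ω j)).prod
            (Measure.pi fun _ : Fin N =>
              ℓ.withDensity fun x =>
                ENNReal.ofReal (etaTildeSeq ℓ p p' ε X Y η0 k ω x))) A).toReal ∂Pr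

/-- An (isotropic) Gaussian transition-kernel density on `ℝ^d`. -/
def IsGaussianKernelDensity (p : Rd d → Rd d → ℝ) : Prop :=
  ∃ σ : ℝ, 0 < σ ∧ ∀ x y,
    p x y = (2 * Real.pi * σ ^ 2) ^ (-(d : ℝ) / 2) * Real.exp (-‖y - x‖ ^ 2 / (2 * σ ^ 2))

/-- The measure `m P'` on `ℝ^d` (density formulation). -/
def measP' {E : Set (Rd d)} (ℓ : Measure (Rd d)) (p' : Rd d → Rd d → ℝ) (m : Measure E) :
    Measure (Rd d) :=
  ℓ.withDensity fun y => ENNReal.ofReal (∫ x, p' x.1 y ∂m)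

/-- Distance on pairs `(m, η)`: TV distance plus TV distance of densities. -/
def pairDist {E : Set (Rd d)} (ℓ : Measure (Rd d)) (q q' : Measure E × (Rd d → ℝ)) : ℝ :=
  tvDist q.1 q'.1 + tvDen ℓ q.2 q'.2

/-- `Φ` has a unique fixed point in `P(E) × P*(ℝ^d)` (identifying measures having
densities with their densities, hence up to `ℓ`-a.e. equality in the second coordinate). -/
def UniqueFixedPointProp {E : Set (Rd d)} (Q Q0 : Kernel E E) (lam : ℝ)
    (ℓ : Measure (Rd d)) (p p' : Rd d → Rd d → ℝ) (ε : ℝ) : Prop :=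
  ∃ q : Measure E × (Rd d → ℝ),
    (IsProbabilityMeasure q.1 ∧ IsDensity ℓ q.2) ∧
    mStep Q Q0 lam q.2 q.1 = q.1 ∧ etaStep ℓ p p' ε q.1 q.2 =ᵐ[ℓ] q.2 ∧
    ∀ q' : Measure E × (Rd d → ℝ),
      (IsProbabilityMeasure q'.1 ∧ IsDensity ℓ q'.2) →
      mStep Q Q0 lam q'.2 q'.1 = q'.1 → etaStep ℓ p p' ε q'.1 q'.2 =ᵐ[ℓ] q'.2 →
      q'.1 = q.1 ∧ q'.2 =ᵐ[ℓ] q.2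

/-- `sup_{f ∈ B1(E)} E(|⟨m_n^N - q.1, f⟩| + ‖η_n^N - q.2‖_TV)` for the particle system. -/
def particleErr {E : Set (Rd d)} (ℓ : Measure (Rd d)) (p p' : Rd d → Rd d → ℝ) (ε : ℝ)
    {N : ℕ} {Ω : Type*} (mΩ : MeasurableSpace Ω) (Pr : @MeasureTheory.Measure Ω mΩ)
    (X : ℕ → Ω → (Fin N → E)) (η0N : Rd d → ℝ)
    (q : Measure E × (Rd d → ℝ)) (n : ℕ) : ℝ :=
  ⨆ f : B1 E, ∫ ω,
    (|∫ x, f.1 x ∂(empMeas (X n ω)) - ∫ x, f.1 x ∂q.1| +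
      tvDen ℓ (etaSeq ℓ p p' ε X η0N n ω) q.2) ∂Pr

/-- `sup_{f ∈ B1(E)} E(|⟨m̃_n^N - q.1, f⟩| + ‖η̃_n^N - q.2‖_TV)` for the particle scheme. -/
def schemeErr {E : Set (Rd d)} (ℓ : Measure (Rd d)) (p p' : Rd d → Rd d → ℝ) (ε : ℝ)
    {N : ℕ} {Ω : Type*} (mΩ : MeasurableSpace Ω) (Pr : @MeasureTheory.Measure Ω mΩ)
    (X : ℕ → Ω → (Fin N → E)) (Y : ℕ → Ω → (Fin N → Rd d)) (η0 : Rd d → ℝ)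
    (q : Measure E × (Rd d → ℝ)) (n : ℕ) : ℝ :=
  ⨆ f : B1 E, ∫ ω,
    (|∫ x, f.1 x ∂(empMeas (X n ω)) - ∫ x, f.1 x ∂q.1| +
      tvDen ℓ (etaTildeSeq ℓ p p' ε X Y η0 n ω) q.2) ∂Pr

/-!
A proposal `y ∼ Q x` is accepted by `M^η` with probability `e^{-λ (η x - η y)₊} ≥ e^{-λ C}`,
so `M^η(x, ·) ≥ e^{-λ C} Q(x, ·) ≥ α ℓ₁` with `α = ε_Q e^{-λ C}` by (AQ). This Doeblin
minorization gives Dobrushin's contraction: for `f ∈ B1`, `g x = ∫ f dM^η(x, ·)` differs from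
`α ∫ f dℓ₁` by the integral of `f` against the residual measure `M^η(x, ·) - α ℓ₁` of mass `1 - α`,
so `(g - α ∫ f dℓ₁) / (1 - α)` is again a test function and
`|⟨m M^η - m' M^η, f⟩| = |⟨m - m', g⟩| ≤ (1 - α) ‖m - m'‖_TV`.
-/

section TotalVariation

variable {S : Type*} [MeasurableSpace S]

instance : Nonempty (B1 S) :=
  ⟨⟨fun _ => 0, measurable_const, fun _ => by simp⟩⟩

lemma integrable_of_abs_le_one {f : S → ℝ} (hf : Measurable f) (hb : ∀ x, |f x| ≤ 1)
    (μ : Measure S) [IsFiniteMeasure μ] : Integrable f μ :=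
  .of_bound hf.aestronglyMeasurable 1 (.of_forall hb)

lemma abs_integral_le_one {f : S → ℝ} (hb : ∀ x, |f x| ≤ 1)
    (μ : Measure S) [IsProbabilityMeasure μ] : |∫ x, f x ∂μ| ≤ 1 := by
  simpa using norm_integral_le_of_norm_le_const (μ := μ) (f := f) (C := 1) (.of_forall hb)

lemma bddAbove_range_abs_integral_sub (μ ν : Measure S) [IsProbabilityMeasure μ]
    [IsProbabilityMeasure ν] :
    BddAbove (Set.range fun f : B1 S => |∫ x, (f : S → ℝ) x ∂μ - ∫ x, (f : S → ℝ) x ∂ν|) := by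
  refine ⟨2, ?_⟩
  rintro _ ⟨f, rfl⟩
  have hμ := abs_integral_le_one f.2.2 μ
  have hν := abs_integral_le_one f.2.2 ν
  calc _ ≤ |∫ x, (f : S → ℝ) x ∂μ| + |∫ x, (f : S → ℝ) x ∂ν| := abs_sub _ _
    _ ≤ 2 := by linarith

/-- After centring at `a` and scaling by `r⁻¹`, `g` becomes a test function in `B1`. -/
lemma abs_integral_sub_integral_le_mul_tvDist (μ ν : Measure S) [IsProbabilityMeasure μ]
    [IsProbabilityMeasure ν] {g : S → ℝ} (hg : Measurable g) {a r : ℝ} (hr : 0 < r)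
    (hga : ∀ x, |g x - a| ≤ r) :
    |∫ x, g x ∂μ - ∫ x, g x ∂ν| ≤ r * tvDist μ ν := by
  set h : S → ℝ := fun x => (g x - a) / r
  have hh : h ∈ B1 S := ⟨(hg.sub measurable_const).div_const r, fun x => by
    rw [abs_div, abs_of_pos hr, div_le_one hr]; exact hga x⟩
  have hg_eq : g = fun x => r * h x + a := by
    funext x; simp only [h]; field_simp; ring
  have hint : ∀ ρ : Measure S, [IsProbabilityMeasure ρ] → ∫ x, g x ∂ρ = r * ∫ x, h x ∂ρ + a := by
    intro ρ _
    rw [hg_eq, integral_add ((integrable_of_abs_le_one hh.1 hh.2 ρ).const_mul r)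
      (integrable_const a), integral_const_mul]
    simp
  rw [hint μ, hint ν, add_sub_add_right_eq_sub, ← mul_sub, abs_mul, abs_of_pos hr]
  exact mul_le_mul_of_nonneg_left
    (le_ciSup (bddAbove_range_abs_integral_sub μ ν) (⟨h, hh⟩ : B1 S)) hr.le

lemma abs_integral_sub_mul_integral_le {μ ν : Measure S} [IsProbabilityMeasure μ]
    [IsProbabilityMeasure ν] {α : ℝ} (hα : 0 ≤ α) (hνμ : ENNReal.ofReal α • ν ≤ μ)
    {f : S → ℝ} (hf : Measurable f) (hb : ∀ x, |f x| ≤ 1) :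
    |∫ x, f x ∂μ - α * ∫ x, f x ∂ν| ≤ 1 - α := by
  have : IsFiniteMeasure (ENNReal.ofReal α • ν) := isFiniteMeasure_of_le μ hνμ
  set ρ := μ - ENNReal.ofReal α • ν
  have hα1 : α ≤ 1 := by
    simpa using hνμ Set.univ
  have hρ_real : ρ.real Set.univ = 1 - α := by
    rw [measureReal_def, Measure.sub_apply MeasurableSet.univ hνμ]
    simp only [measure_univ, Measure.smul_apply, smul_eq_mul, mul_one]
    rw [ENNReal.toReal_sub_of_le (ENNReal.ofReal_le_one.2 hα1) ENNReal.one_ne_top,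
      ENNReal.toReal_one, ENNReal.toReal_ofReal hα]
  have hsplit : ∫ x, f x ∂μ = ∫ x, f x ∂ρ + α * ∫ x, f x ∂ν := by
    conv_lhs => rw [← Measure.sub_add_cancel_of_le hνμ]
    rw [integral_add_measure
      ((integrable_of_abs_le_one hf hb μ).mono_measure Measure.sub_le)
      ((integrable_of_abs_le_one hf hb ν).smul_measure ENNReal.ofReal_ne_top),
      integral_smul_measure, ENNReal.toReal_ofReal hα, smul_eq_mul]
  have : IsFiniteMeasure ρ := isFiniteMeasure_of_le μ Measure.sub_le
  rw [hsplit, add_sub_cancel_right, ← hρ_real]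
  simpa using norm_integral_le_of_norm_le_const (μ := ρ) (f := f) (C := 1) (.of_forall hb)

lemma integral_bind_eq_integral_integral (m : Measure S) [SFinite m] (K : Kernel S S)
    [IsSFiniteKernel K] {f : S → ℝ} (hf : Integrable f (m.bind K)) :
    ∫ y, f y ∂(m.bind K) = ∫ x, ∫ y, f y ∂(K x) ∂m := by
  rw [← Measure.snd_compProd, Measure.snd, integral_map measurable_snd.aemeasurable,
    Measure.integral_compProd]
  · exact (Measure.integrable_compProd_snd_iff hf.1).2 hf
  · rw [← Measure.snd, Measure.snd_compProd]; exact hf.1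

lemma tvDist_bind_le_of_smul_le (K : Kernel S S) [IsMarkovKernel K] (ν : Measure S)
    [IsProbabilityMeasure ν] {α : ℝ} (hα0 : 0 ≤ α) (hα1 : α < 1)
    (hK : ∀ x, ENNReal.ofReal α • ν ≤ K x)
    (m m' : Measure S) [IsProbabilityMeasure m] [IsProbabilityMeasure m'] :
    tvDist (m.bind K) (m'.bind K) ≤ (1 - α) * tvDist m m' := by
  refine ciSup_le fun ⟨f, hfm, hfb⟩ => ?_
  have hint : ∀ μ : Measure S, [IsProbabilityMeasure μ] →
      ∫ y, f y ∂(μ.bind K) = ∫ x, ∫ y, f y ∂(K x) ∂μ := fun μ _ =>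
    integral_bind_eq_integral_integral μ K (integrable_of_abs_le_one hfm hfb _)
  have hg : Measurable fun x => ∫ y, f y ∂(K x) :=
    ((hfm.comp measurable_snd).stronglyMeasurable.integral_kernel_prod_right' (κ := K)).measurable
  rw [hint m, hint m']
  exact abs_integral_sub_integral_le_mul_tvDist m m' hg (by linarith)
    fun x => abs_integral_sub_mul_integral_le hα0 (hK x) hfm hfb

end TotalVariation

section RejectionKernel

variable {S : Type*} [MeasurableSpace S]

/-- From `x`, propose `y ∼ Q x` and accept it with probability `w x y`; on rejection, move
according to `Q0 x` instead. -/
def rejectionKernel (Q Q0 : Kernel S S) [IsSFiniteKernel Q] [IsSFiniteKernel Q0]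
    (w : S → S → ℝ) : Kernel S S :=
  Q.withDensity (fun x y => ENNReal.ofReal (w x y))
    + Q0.withDensity (fun x _ => ENNReal.ofReal (1 - ∫ y, w x y ∂Q x))

variable (Q Q0 : Kernel S S) {w : S → S → ℝ}

lemma rejectionKernel_apply [IsSFiniteKernel Q] [IsSFiniteKernel Q0]
    (hw : Measurable (Function.uncurry w)) (x : S) :
    rejectionKernel Q Q0 w x = (Q x).withDensity (fun y => ENNReal.ofReal (w x y))
      + ENNReal.ofReal (1 - ∫ y, w x y ∂Q x) • Q0 x := by
  have hrej : Measurable fun x => ENNReal.ofReal (1 - ∫ y, w x y ∂Q x) :=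
    ENNReal.measurable_ofReal.comp
      (measurable_const.sub hw.stronglyMeasurable.integral_kernel_prod_right.measurable)
  rw [rejectionKernel, add_apply, Kernel.withDensity_apply _
    (f := fun x y => ENNReal.ofReal (w x y)) (ENNReal.measurable_ofReal.comp hw),
    Kernel.withDensity_apply _ (f := fun x _ => ENNReal.ofReal (1 - ∫ y, w x y ∂Q x))
    (hrej.comp measurable_fst), withDensity_const]

lemma isMarkovKernel_rejectionKernel [IsMarkovKernel Q] [IsMarkovKernel Q0]
    (hw : Measurable (Function.uncurry w)) (hw0 : ∀ x y, 0 ≤ w x y) (hw1 : ∀ x y, w x y ≤ 1) :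
    IsMarkovKernel (rejectionKernel Q Q0 w) := by
  refine ⟨fun x => ⟨?_⟩⟩
  have hint : Integrable (w x) (Q x) :=
    .of_bound (hw.comp measurable_prodMk_left).aestronglyMeasurable 1
      (.of_forall fun y => by rw [Real.norm_of_nonneg (hw0 x y)]; exact hw1 x y)
  have hmass : ∫ y, w x y ∂Q x ≤ 1 := by
    simpa using integral_mono hint (integrable_const 1) (hw1 x)
  rw [rejectionKernel_apply Q Q0 hw, Measure.add_apply, withDensity_apply _ .univ,
    Measure.restrict_univ, ← ofReal_integral_eq_lintegral_ofReal hint (.of_forall (hw0 x)),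
    Measure.smul_apply, measure_univ, smul_eq_mul, mul_one,
    ← ENNReal.ofReal_add (integral_nonneg (hw0 x)) (by linarith)]
  simp

lemma smul_le_rejectionKernel [IsSFiniteKernel Q] [IsSFiniteKernel Q0]
    (hw : Measurable (Function.uncurry w)) {x : S} {c : ℝ} (hc : ∀ y, c ≤ w x y) :
    ENNReal.ofReal c • Q x ≤ rejectionKernel Q Q0 w x := by
  rw [rejectionKernel_apply Q Q0 hw, ← withDensity_const]
  exact (withDensity_mono (.of_forall fun y => ENNReal.ofReal_le_ofReal (hc y))).trans
    (Measure.le_add_right le_rfl)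

end RejectionKernel

section Mker

variable {E : Set (Rd d)}

def acceptProb (lam : ℝ) (Ψ : Rd d → ℝ) (x y : E) : ℝ :=
  Real.exp (-(lam * max (Ψ x.1 - Ψ y.1) 0))

lemma measurable_acceptProb (lam : ℝ) {Ψ : Rd d → ℝ} (hΨ : Measurable Ψ) :
    Measurable (Function.uncurry (acceptProb (E := E) lam Ψ)) := by
  have hΨE : Measurable fun x : E => Ψ x.1 := hΨ.comp measurable_subtype_coe
  unfold acceptProb
  fun_prop

lemma acceptProb_le_one {lam : ℝ} (hlam : 0 ≤ lam) (Ψ : Rd d → ℝ) (x y : E) :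
    acceptProb lam Ψ x y ≤ 1 :=
  Real.exp_le_one_iff.2 (neg_nonpos.2 (mul_nonneg hlam (le_max_right _ _)))

lemma exp_neg_mul_le_acceptProb {lam : ℝ} (hlam : 0 ≤ lam) {Ψ : Rd d → ℝ} {C : ℝ}
    (hC : ∀ x y, |Ψ x - Ψ y| ≤ C) (x y : E) :
    Real.exp (-(lam * C)) ≤ acceptProb lam Ψ x y := by
  have hmax : max (Ψ x.1 - Ψ y.1) 0 ≤ C :=
    max_le ((le_abs_self _).trans (hC _ _)) ((abs_nonneg _).trans (hC x y))
  exact Real.exp_le_exp.2 (neg_le_neg (mul_le_mul_of_nonneg_left hmax hlam))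

lemma mStep_eq_bind (Q Q0 : Kernel E E) [IsSFiniteKernel Q] [IsSFiniteKernel Q0] (lam : ℝ)
    {Ψ : Rd d → ℝ} (hΨ : Measurable Ψ) (m : Measure E) :
    mStep Q Q0 lam Ψ m = m.bind (rejectionKernel Q Q0 (acceptProb lam Ψ)) := by
  unfold mStep
  congr 1
  funext x
  rw [rejectionKernel_apply Q Q0 (measurable_acceptProb lam hΨ)]
  rfl

end Mker

theorem stmt13_general {d : ℕ}
    (E : Set (Rd d))
    (ℓ : Measure (Rd d))
    (Q Q0 : Kernel E E) (hQ : IsMarkovKernel Q) (hQ0 : IsMarkovKernel Q0)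
    (lam : ℝ) (hlam : 0 < lam)
    -- Assumption (AQ)
    (εQ : ℝ) (hεQ : εQ ∈ Set.Ioo (0 : ℝ) 1)
    (ℓ1 : Measure E) (hℓ1 : IsProbabilityMeasure ℓ1)
    (hAQ : ∀ (x : E) (A : Set E), MeasurableSet A → ENNReal.ofReal εQ * ℓ1 A ≤ Q x A)
:
    ∀ m m' : Measure E, IsProbabilityMeasure m → IsProbabilityMeasure m' →
      ∀ η : Rd d → ℝ, IsDensity ℓ η →
      ∀ C : ℝ, (∀ x y, |η x - η y| ≤ C) →
        tvDist (mStep Q Q0 lam η m) (mStep Q Q0 lam η m')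
          ≤ (1 - εQ * Real.exp (-(lam * C))) * tvDist m m'  := by
  intro m m' hm hm' η hη C hC
  set e := Real.exp (-(lam * C))
  have he : e ≤ 1 :=
    Real.exp_le_one_iff.2 (neg_nonpos.2 (mul_nonneg hlam.le ((abs_nonneg _).trans (hC 0 0))))
  have hw := measurable_acceptProb (E := E) lam hη.1
  have := isMarkovKernel_rejectionKernel Q Q0 hw (fun _ _ => (Real.exp_pos _).le)
    (acceptProb_le_one hlam.le η)
  have hminor : ∀ x,
      ENNReal.ofReal (εQ * e) • ℓ1 ≤ rejectionKernel Q Q0 (acceptProb lam η) x := by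
    intro x
    have hQ_minor : ENNReal.ofReal εQ • ℓ1 ≤ Q x :=
      Measure.le_iff.2 fun s hs => hAQ x s hs
    calc ENNReal.ofReal (εQ * e) • ℓ1 = ENNReal.ofReal e • ENNReal.ofReal εQ • ℓ1 := by
          rw [mul_comm, ENNReal.ofReal_mul (Real.exp_pos _).le, mul_smul]
      _ ≤ ENNReal.ofReal e • Q x := by gcongr
      _ ≤ _ := smul_le_rejectionKernel Q Q0 hw (exp_neg_mul_le_acceptProb hlam.le hC x)
  rw [mStep_eq_bind Q Q0 lam hη.1, mStep_eq_bind Q Q0 lam hη.1]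
  exact tvDist_bind_le_of_smul_le _ ℓ1 (mul_pos hεQ.1 (Real.exp_pos _)).le
    (mul_lt_one_of_nonneg_of_lt_one_left hεQ.1.le hεQ.2 he) hminor m m'

/-- **Lemma (Dobrushin-type contraction for `M^η`)**. -/
theorem stmt13 {d : ℕ}
    (E : Set (Rd d)) (hEc : IsCompact E) (hEi : (interior E).Nonempty)
    (hEm : MeasurableSet E)
    (ℓ : Measure (Rd d))
    (Q Q0 : Kernel E E) (hQ : IsMarkovKernel Q) (hQ0 : IsMarkovKernel Q0)
    (p p' : Rd d → Rd d → ℝ)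
    (hp : IsKernelDensity ℓ p) (hp' : IsKernelDensity ℓ p')
    (lam : ℝ) (hlam : 0 < lam)
    -- Assumption (AQ)
    (εQ : ℝ) (hεQ : εQ ∈ Set.Ioo (0 : ℝ) 1)
    (ℓ1 : Measure E) (hℓ1 : IsProbabilityMeasure ℓ1)
    (hAQ : ∀ (x : E) (A : Set E), MeasurableSet A → ENNReal.ofReal εQ * ℓ1 A ≤ Q x A)
:
    ∀ m m' : Measure E, IsProbabilityMeasure m → IsProbabilityMeasure m' →
      ∀ η : Rd d → ℝ, IsDensity ℓ η →
      ∀ C : ℝ, (∀ x y, |η x - η y| ≤ C) →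
        tvDist (mStep Q Q0 lam η m) (mStep Q Q0 lam η m')
          ≤ (1 - εQ * Real.exp (-(lam * C))) * tvDist m m' :=
  stmt13_general E ℓ Q Q0 hQ hQ0 lam hlam εQ hεQ ℓ1 hℓ1 hAQ
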